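/- arXiv:2402.09077 — 5 statements merged into one kernel-verified Lean document; each statement's English description precedes it below -/
import Mathlib

section
/- For any real square matrices J and Z of the same size, if ρ(I − J Z) < 1 (spectral radius strictly below 1) and J is invertible, then the hyperpower-type iteration Z_{f+1} = (1/4) Z_f (13 I − J Z_f (15 I − J Z_f (7 I − J Z_f))) converges to J⁻¹. -/
open Matrix Filter Topology Polynomial

section AuxNorm

attribute [local instance] Matrix.linftyOpNormedAddCommGroup Matrix.linftyOpNormedRing
  Matrix.linftyOpNormedAlgebra Matrix.linftyOpNormedSpace Matrix.linftyOpIsBoundedSMul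

noncomputable instance auxComplete {n : ℕ} : CompleteSpace (Matrix (Fin n) (Fin n) ℂ) :=
  inferInstance

lemma aux_entry_le {n : ℕ} (A : Matrix (Fin n) (Fin n) ℂ) (i j : Fin n) :
    ‖A i j‖ ≤ ‖A‖ := by
  have h : ‖A i j‖₊ ≤ ‖A‖₊ := by
    rw [Matrix.linfty_opNNNorm_def]
    exact le_trans
      (Finset.single_le_sum (f := fun k => ‖A i k‖₊) (fun _ _ => by positivity) (Finset.mem_univ j))
      (Finset.le_sup (f := fun i => ∑ j, ‖A i j‖₊) (Finset.mem_univ i))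
  calc ‖A i j‖ = ‖A i j‖ := rfl
  _ ≤ ‖A‖ := h

lemma aux_norm_bound {n : ℕ} (Ec : Matrix (Fin n) (Fin n) ℂ)
    (hρ : ∀ μ ∈ spectrum ℂ Ec, ‖μ‖ < 1) :
    ∃ (K r : ℝ), 0 < r ∧ r < 1 ∧ 0 ≤ K ∧
      ∀ (s : Polynomial ℝ), (∀ i, 0 ≤ s.coeff i) →
        ∀ i j, ‖(Polynomial.aeval Ec s) i j‖ ≤ K * s.eval r := by
  -- find r with spectralRadius < ofReal r < 1
  obtain ⟨r, hr0, hr1, hsr⟩ : ∃ r : ℝ, 0 < r ∧ r < 1 ∧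
      spectralRadius ℂ Ec < ENNReal.ofReal r := by
    rcases (spectrum ℂ Ec).eq_empty_or_nonempty with h | h
    · refine ⟨1/2, by norm_num, by norm_num, ?_⟩
      have : spectralRadius ℂ Ec = 0 := by
        simp [spectralRadius, h]
      rw [this]
      exact ENNReal.ofReal_pos.mpr (by norm_num)
    · obtain ⟨μ₀, hμ₀, hmax⟩ := (spectrum.isCompact Ec).exists_isMaxOn h
        (continuous_norm.continuousOn)
      have hμ₀1 : ‖μ₀‖ < 1 := hρ μ₀ hμ₀
      have hμ₀0 : 0 ≤ ‖μ₀‖ := norm_nonneg _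
      refine ⟨(‖μ₀‖ + 1)/2, by linarith, by linarith, ?_⟩
      have h1 : spectralRadius ℂ Ec ≤ ENNReal.ofReal (‖μ₀‖) := by
        rw [spectralRadius]
        refine iSup₂_le fun k hk => ?_
        rw [← enorm_eq_nnnorm, ← ofReal_norm]
        exact ENNReal.ofReal_le_ofReal (hmax hk)
      refine lt_of_le_of_lt h1 ?_
      rw [ENNReal.ofReal_lt_ofReal_iff (by linarith)]
      linarith
  -- Gelfand
  have hsr' : spectralRadius ℂ Ec < ENNReal.ofReal r := hsr
  have hgel := spectrum.pow_nnnorm_pow_one_div_tendsto_nhds_spectralRadius Ec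
  have hev := (hgel.eventually_lt_const hsr')
  obtain ⟨M₀, hM₀⟩ := eventually_atTop.mp hev
  set M := max M₀ 1 with hM
  have hpow : ∀ m, M ≤ m → ‖Ec ^ m‖ ≤ r ^ m := by
    intro m hm
    have h1 : 1 ≤ m := le_trans (le_max_right _ _) hm
    have hm0 : (m : ℝ) ≠ 0 := by
      have : 0 < m := h1
      positivity
    have h2 := hM₀ m (le_trans (le_max_left _ _) hm)
    have h3 := ENNReal.rpow_le_rpow h2.le (by positivity : (0:ℝ) ≤ (m:ℝ))
    rw [← ENNReal.rpow_mul, one_div, inv_mul_cancel₀ hm0, ENNReal.rpow_one] at h3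
    rw [ENNReal.ofReal_rpow_of_pos hr0] at h3
    rw [← enorm_eq_nnnorm, ← ofReal_norm] at h3
    have h4 : ‖Ec ^ m‖ ≤ r ^ (m:ℝ) := by
      refine (ENNReal.ofReal_le_ofReal_iff (by positivity)).mp h3
    rwa [Real.rpow_natCast] at h4
  set K := 1 + ∑ m ∈ Finset.range M, ‖Ec ^ m‖ / r ^ m with hK
  have hsum0 : 0 ≤ ∑ m ∈ Finset.range M, ‖Ec ^ m‖ / r ^ m :=
    Finset.sum_nonneg fun m _ => div_nonneg (norm_nonneg _) (by positivity)
  have hK1 : (1:ℝ) ≤ K := le_add_of_nonneg_right hsum0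
  have hK0 : (0:ℝ) ≤ K := by linarith
  have hKb : ∀ m, ‖Ec ^ m‖ ≤ K * r ^ m := by
    intro m
    rcases lt_or_ge m M with h | h
    · have h1 : ‖Ec ^ m‖ / r ^ m ≤ K := by
        rw [hK]
        have : ‖Ec ^ m‖ / r ^ m ≤ ∑ k ∈ Finset.range M, ‖Ec ^ k‖ / r ^ k :=
          Finset.single_le_sum (f := fun k => ‖Ec ^ k‖ / r ^ k)
            (fun k _ => div_nonneg (norm_nonneg _) (by positivity))
            (Finset.mem_range.mpr h)
        linarith
      calc ‖Ec ^ m‖ = (‖Ec ^ m‖ / r ^ m) * r ^ m := by field_simp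
      _ ≤ K * r ^ m := mul_le_mul_of_nonneg_right h1 (by positivity)
    · exact (hpow m h).trans (le_mul_of_one_le_left (by positivity) hK1)
  refine ⟨K, r, hr0, hr1, hK0, ?_⟩
  intro s hs i j
  refine le_trans (aux_entry_le _ i j) ?_
  rw [Polynomial.aeval_eq_sum_range]
  refine le_trans (norm_sum_le _ _) ?_
  have hterm : ∀ k ∈ Finset.range (s.natDegree + 1),
      ‖s.coeff k • Ec ^ k‖ ≤ s.coeff k * (K * r ^ k) := by
    intro k _
    rw [norm_smul, Real.norm_eq_abs, abs_of_nonneg (hs k)]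
    exact mul_le_mul_of_nonneg_left (hKb k) (hs k)
  refine le_trans (Finset.sum_le_sum hterm) ?_
  rw [Polynomial.eval_eq_sum_range, Finset.mul_sum]
  refine le_of_eq (Finset.sum_congr rfl fun k _ => by ring)

end AuxNorm


noncomputable def hpPoly : ℕ → Polynomial ℝ
  | 0 => Polynomial.X
  | (f+1) => Polynomial.C (3/4 : ℝ) * (hpPoly f) ^ 3 + Polynomial.C (1/4 : ℝ) * (hpPoly f) ^ 4

lemma hpPoly_coeff_nonneg : ∀ f i, 0 ≤ (hpPoly f).coeff i := by
  have hmul : ∀ (a b : Polynomial ℝ), (∀ i, 0 ≤ a.coeff i) → (∀ i, 0 ≤ b.coeff i) →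
      ∀ i, 0 ≤ (a * b).coeff i := by
    intro a b ha hb i
    rw [Polynomial.coeff_mul]
    exact Finset.sum_nonneg fun p _ => mul_nonneg (ha _) (hb _)
  intro f
  induction f with
  | zero =>
    intro i
    simp only [hpPoly, Polynomial.coeff_X]
    split_ifs <;> norm_num
  | succ f ih =>
    have hC : ∀ (c : ℝ), 0 ≤ c → ∀ i, 0 ≤ (Polynomial.C c).coeff i := by
      intro c hc i
      simp only [Polynomial.coeff_C]
      split_ifs <;> simp [hc]
    have h2 : ∀ i, 0 ≤ ((hpPoly f) ^ 2).coeff i := by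
      have : (hpPoly f) ^ 2 = hpPoly f * hpPoly f := by ring
      rw [this]; exact hmul _ _ ih ih
    have h3 : ∀ i, 0 ≤ ((hpPoly f) ^ 3).coeff i := by
      have : (hpPoly f) ^ 3 = (hpPoly f) ^ 2 * hpPoly f := by ring
      rw [this]; exact hmul _ _ h2 ih
    have h4 : ∀ i, 0 ≤ ((hpPoly f) ^ 4).coeff i := by
      have : (hpPoly f) ^ 4 = (hpPoly f) ^ 3 * hpPoly f := by ring
      rw [this]; exact hmul _ _ h3 ih
    intro i
    simp only [hpPoly, Polynomial.coeff_add]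
    exact add_nonneg (hmul _ _ (hC _ (by norm_num)) h3 i) (hmul _ _ (hC _ (by norm_num)) h4 i)

lemma hpPoly_eval_le {r : ℝ} (h0 : 0 ≤ r) (h1 : r ≤ 1) :
    ∀ f, 0 ≤ (hpPoly f).eval r ∧ (hpPoly f).eval r ≤ r ^ (f + 1) := by
  intro f
  induction f with
  | zero => simp [hpPoly]; exact h0
  | succ f ih =>
    obtain ⟨he0, he1⟩ := ih
    set e := (hpPoly f).eval r with he
    have heval : (hpPoly (f+1)).eval r = (3/4) * e ^ 3 + (1/4) * e ^ 4 := by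
      simp [hpPoly, he]
    have hrpow1 : r ^ (f+1) ≤ 1 := pow_le_one₀ h0 h1
    have he2 : e ≤ 1 := le_trans he1 hrpow1
    have hrr : r ^ (f+1) ≤ r := by
      calc r ^ (f+1) = r ^ f * r := by ring
      _ ≤ 1 * r := mul_le_mul_of_nonneg_right (pow_le_one₀ h0 h1) h0
      _ = r := one_mul r
    have her : e ≤ r := le_trans he1 hrr
    constructor
    · rw [heval]; positivity
    · rw [heval]
      have h32 : e ^ 3 ≤ e ^ 2 := pow_le_pow_of_le_one he0 he2 (by norm_num)
      have h42 : e ^ 4 ≤ e ^ 2 := pow_le_pow_of_le_one he0 he2 (by norm_num)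
      have step1 : (3/4) * e ^ 3 + (1/4) * e ^ 4 ≤ e ^ 2 := by linarith
      have step2 : e ^ 2 ≤ r ^ (f+1) * r := by
        have : e ^ 2 = e * e := by ring
        rw [this]
        exact mul_le_mul he1 her he0 (by positivity)
      calc (3/4) * e ^ 3 + (1/4) * e ^ 4 ≤ r ^ (f+1) * r := le_trans step1 step2
      _ = r ^ (f+1+1) := by ring


/-- If the spectral radius of `I − J Z₀` is below one and `J` is invertible, the
hyperpower iteration converges to `J⁻¹`. -/
theorem hyperpower_converges_to_inverse {n : ℕ}
    (J Z₀ : Matrix (Fin n) (Fin n) ℝ) (hJ : IsUnit J.det)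
    (hρ : ∀ μ ∈ spectrum ℂ
        ((1 : Matrix (Fin n) (Fin n) ℂ) - (J * Z₀).map (Complex.ofReal)),
      ‖μ‖ < 1)
    (Z : ℕ → Matrix (Fin n) (Fin n) ℝ) (hZ0 : Z 0 = Z₀)
    (hiter : ∀ f, Z (f + 1) =
      (1 / 4 : ℝ) • (Z f * ((13 : ℝ) • (1 : Matrix (Fin n) (Fin n) ℝ) -
        J * Z f * ((15 : ℝ) • (1 : Matrix (Fin n) (Fin n) ℝ) -
          J * Z f * ((7 : ℝ) • (1 : Matrix (Fin n) (Fin n) ℝ) - J * Z f))))) :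
    Tendsto Z atTop (nhds J⁻¹) := by
  set Ec : Matrix (Fin n) (Fin n) ℂ :=
    (1 : Matrix (Fin n) (Fin n) ℂ) - (J * Z₀).map (Complex.ofReal) with hEc
  -- entrywise map lemmas
  have hsm : ∀ (c : ℝ) (M : Matrix (Fin n) (Fin n) ℝ),
      (c • M).map Complex.ofReal = c • M.map Complex.ofReal := by
    intro c M; ext i j
    simp [Matrix.map_apply, Matrix.smul_apply, smul_eq_mul, Complex.real_smul,
      Complex.ofReal_mul]
  have hmm : ∀ (M N : Matrix (Fin n) (Fin n) ℝ),
      (M * N).map Complex.ofReal = M.map Complex.ofReal * N.map Complex.ofReal := by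
    intro M N; ext i j
    simp only [Matrix.map_apply, Matrix.mul_apply]
    push_cast
    rfl
  have hms : ∀ (M N : Matrix (Fin n) (Fin n) ℝ),
      (M - N).map Complex.ofReal = M.map Complex.ofReal - N.map Complex.ofReal := by
    intro M N; ext i j; simp [Matrix.map_apply, Matrix.sub_apply]
  have hone : (1 : Matrix (Fin n) (Fin n) ℝ).map Complex.ofReal = 1 := by
    ext i j; by_cases h : i = j <;> simp [Matrix.map_apply, Matrix.one_apply, h]
  -- aeval helpers
  have hsubA : ∀ t : Polynomial ℝ,
      (1 : Matrix (Fin n) (Fin n) ℂ) - Polynomial.aeval Ec t = Polynomial.aeval Ec (1 - t) := by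
    intro t; rw [_root_.map_sub, _root_.map_one]
  have hcA : ∀ c : ℝ, c • (1 : Matrix (Fin n) (Fin n) ℂ) = Polynomial.aeval Ec (Polynomial.C c) := by
    intro c; rw [Polynomial.aeval_C, Algebra.algebraMap_eq_smul_one]
  have hsmulA : ∀ (c : ℝ) (t : Polynomial ℝ),
      c • (Polynomial.aeval Ec t : Matrix (Fin n) (Fin n) ℂ)
        = Polynomial.aeval Ec (Polynomial.C c * t) := by
    intro c t
    rw [_root_.map_mul, Polynomial.aeval_C, Algebra.algebraMap_eq_smul_one, smul_mul_assoc, one_mul]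
  -- the key one-variable identity
  have hident : ∀ s : Polynomial ℝ,
      (1/4 : ℝ) • ((1 - Polynomial.aeval Ec s) * ((13 : ℝ) • (1 : Matrix (Fin n) (Fin n) ℂ) -
          (1 - Polynomial.aeval Ec s) * ((15 : ℝ) • (1 : Matrix (Fin n) (Fin n) ℂ) -
            (1 - Polynomial.aeval Ec s) * ((7 : ℝ) • (1 : Matrix (Fin n) (Fin n) ℂ) -
              (1 - Polynomial.aeval Ec s)))))
        = 1 - Polynomial.aeval Ec
            (Polynomial.C (3/4 : ℝ) * s ^ 3 + Polynomial.C (1/4 : ℝ) * s ^ 4) := by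
    intro s
    rw [hsubA s, hcA, hcA, hcA]
    simp only [← _root_.map_mul, ← _root_.map_sub]
    rw [hsmulA, hsubA]
    congr 1
    apply Polynomial.funext
    intro x
    simp only [Polynomial.eval_mul, Polynomial.eval_sub, Polynomial.eval_add,
      Polynomial.eval_one, Polynomial.eval_C, Polynomial.eval_pow]
    ring
  -- main induction
  have hkey : ∀ f, (J * Z f).map Complex.ofReal = 1 - Polynomial.aeval Ec (hpPoly f) := by
    intro f
    induction f with
    | zero =>
      rw [hZ0, show hpPoly 0 = Polynomial.X from rfl, Polynomial.aeval_X, hEc, sub_sub_cancel]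
    | succ f ih =>
      have h1 : J * Z (f+1) = (1/4 : ℝ) • ((J * Z f) * ((13:ℝ) • 1 -
          (J * Z f) * ((15:ℝ) • 1 - (J * Z f) * ((7:ℝ) • 1 - J * Z f)))) := by
        rw [hiter f, mul_smul_comm, ← mul_assoc]
      obtain ⟨B, hB⟩ : ∃ B, B = J * Z f := ⟨_, rfl⟩
      rw [← hB] at h1 ih
      rw [h1]
      simp only [hmm, hms, hsm, hone]
      rw [ih, hident (hpPoly f),
        show hpPoly (f+1) = Polynomial.C (3/4 : ℝ) * (hpPoly f) ^ 3 +
          Polynomial.C (1/4 : ℝ) * (hpPoly f) ^ 4 from rfl]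
  -- convergence
  obtain ⟨K, r, hr0, hr1, hK0, hbound⟩ := aux_norm_bound Ec hρ
  have hEf : ∀ f, ((1 : Matrix (Fin n) (Fin n) ℝ) - J * Z f).map Complex.ofReal
      = Polynomial.aeval Ec (hpPoly f) := by
    intro f; rw [hms, hone, hkey f, sub_sub_cancel]
  have hEntry : ∀ f i j,
      |((1 : Matrix (Fin n) (Fin n) ℝ) - J * Z f) i j| ≤ K * r ^ (f+1) := by
    intro f i j
    have h1 : ‖(Polynomial.aeval Ec (hpPoly f)) i j‖ ≤ K * (hpPoly f).eval r :=
      hbound (hpPoly f) (hpPoly_coeff_nonneg f) i j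
    have h2 : ((Polynomial.aeval Ec (hpPoly f)) i j)
        = Complex.ofReal ((((1 : Matrix (Fin n) (Fin n) ℝ) - J * Z f)) i j) := by
      rw [← hEf f]; simp [Matrix.map_apply]
    rw [h2, Complex.norm_real, Real.norm_eq_abs] at h1
    refine le_trans h1 ?_
    exact mul_le_mul_of_nonneg_left (hpPoly_eval_le hr0.le hr1.le f).2 hK0
  have hg : Tendsto (fun f : ℕ => K * r ^ (f+1)) atTop (nhds 0) := by
    have h1 : Tendsto (fun f : ℕ => r ^ f) atTop (nhds 0) :=
      tendsto_pow_atTop_nhds_zero_of_lt_one hr0.le hr1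
    have h2 : Tendsto (fun f : ℕ => r ^ (f+1)) atTop (nhds 0) := by
      exact h1.comp (tendsto_add_atTop_nat 1)
    simpa using h2.const_mul K
  have hE0 : Tendsto (fun f => (1 : Matrix (Fin n) (Fin n) ℝ) - J * Z f) atTop (nhds 0) := by
    apply tendsto_pi_nhds.mpr; intro i
    rw [tendsto_pi_nhds]; intro j
    have hz : (0 : Matrix (Fin n) (Fin n) ℝ) i j = 0 := rfl
    rw [hz]
    exact squeeze_zero_norm
      (fun f => by rw [Real.norm_eq_abs]; exact hEntry f i j) hg
  have hfinal : Tendsto (fun f => J⁻¹ - J⁻¹ * ((1 : Matrix (Fin n) (Fin n) ℝ) - J * Z f))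
      atTop (nhds (J⁻¹ - J⁻¹ * 0)) :=
    tendsto_const_nhds.sub (tendsto_const_nhds.mul hE0)
  have hrep : (fun f => J⁻¹ - J⁻¹ * ((1 : Matrix (Fin n) (Fin n) ℝ) - J * Z f)) = Z := by
    funext f
    rw [mul_sub, mul_one, ← mul_assoc, Matrix.nonsing_inv_mul J hJ, one_mul, sub_sub_cancel]
  rw [hrep] at hfinal
  simpa using hfinal
end

section
/- If E is a real n×n matrix with ‖E‖_F < 1, then ‖(1/4) E³ (3 I + E)‖_F ≤ ‖E‖³_F. Consequently, if E₀ satisfies ‖E₀‖_F < 1, the sequence defined by E_{f+1} = (1/4) E_f³ (3 I + E_f) converges to the zero matrix. -/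
open Matrix Filter Topology

/-- Frobenius norm of a real matrix. -/
noncomputable def frob {m n : Type*} [Fintype m] [Fintype n] (A : Matrix m n ℝ) : ℝ :=
  Real.sqrt (∑ i, ∑ j, (A i j) ^ 2)

section Aux

attribute [local instance] Matrix.frobeniusNormedAddCommGroup Matrix.frobeniusNormedRing Matrix.frobeniusIsBoundedSMul Matrix.frobeniusNormSMulClass

lemma frob_eq_norm {m n : Type*} [Fintype m] [Fintype n] (A : Matrix m n ℝ) :
    frob A = ‖A‖ := by
  rw [frob, Matrix.frobenius_norm_def, Real.sqrt_eq_rpow]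
  congr 1
  refine Finset.sum_congr rfl fun i _ => Finset.sum_congr rfl fun j _ => ?_
  rw [Real.norm_eq_abs, Real.rpow_two, sq_abs]

lemma frob_nonneg {m n : Type*} [Fintype m] [Fintype n] (A : Matrix m n ℝ) :
    0 ≤ frob A := Real.sqrt_nonneg _

lemma frob_step {n : ℕ} (A : Matrix (Fin n) (Fin n) ℝ) (hA : frob A < 1) :
    frob ((1 / 4 : ℝ) • (A ^ 3 * ((3 : ℝ) • (1 : Matrix (Fin n) (Fin n) ℝ) + A)))
      ≤ frob A ^ 3 := by
  have hnn := frob_nonneg A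
  simp only [frob_eq_norm] at hA ⊢
  have h1 : A ^ 3 * ((3 : ℝ) • (1 : Matrix (Fin n) (Fin n) ℝ) + A)
      = (3 : ℝ) • A ^ 3 + A ^ 4 := by
    rw [mul_add, mul_smul_comm, mul_one, ← pow_succ]
  rw [h1, norm_smul]
  have h2 : ‖(3 : ℝ) • A ^ 3 + A ^ 4‖ ≤ 3 * ‖A‖ ^ 3 + ‖A‖ ^ 4 := by
    refine (norm_add_le _ _).trans (add_le_add ?_ ?_)
    · rw [norm_smul, Real.norm_ofNat]
      exact mul_le_mul_of_nonneg_left (norm_pow_le' A (by norm_num)) (by norm_num)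
    · exact norm_pow_le' A (by norm_num)
  have h3 : ‖(1 / 4 : ℝ)‖ = 1 / 4 := by norm_num
  rw [h3]
  nlinarith [norm_nonneg A, pow_nonneg (norm_nonneg A) 3]

lemma entry_le_frob {m n : Type*} [Fintype m] [Fintype n] (A : Matrix m n ℝ) (i : m) (j : n) :
    |A i j| ≤ frob A := by
  rw [frob, ← Real.sqrt_sq_eq_abs]
  apply Real.sqrt_le_sqrt
  calc (A i j) ^ 2 ≤ ∑ j', (A i j') ^ 2 :=
        Finset.single_le_sum (f := fun j' => (A i j') ^ 2) (fun _ _ => sq_nonneg _) (Finset.mem_univ j)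
    _ ≤ ∑ i', ∑ j', (A i' j') ^ 2 :=
        Finset.single_le_sum (f := fun i' => ∑ j', (A i' j') ^ 2)
          (fun _ _ => Finset.sum_nonneg fun _ _ => sq_nonneg _) (Finset.mem_univ i)

end Aux

/-- If `‖E‖_F < 1` then `‖(1/4)E³(3I+E)‖_F ≤ ‖E‖_F³`, and the residual sequence
`E_{f+1} = (1/4) E_f³ (3I + E_f)` converges to zero. -/
theorem residual_cubic_contraction {n : ℕ}
    (E₀ : Matrix (Fin n) (Fin n) ℝ) (hE₀ : frob E₀ < 1)
    (E : ℕ → Matrix (Fin n) (Fin n) ℝ) (hE0 : E 0 = E₀)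
    (hiter : ∀ f, E (f + 1) =
      (1 / 4 : ℝ) • (E f ^ 3 * ((3 : ℝ) • (1 : Matrix (Fin n) (Fin n) ℝ) + E f))) :
    (∀ A : Matrix (Fin n) (Fin n) ℝ, frob A < 1 →
        frob ((1 / 4 : ℝ) • (A ^ 3 * ((3 : ℝ) • (1 : Matrix (Fin n) (Fin n) ℝ) + A)))
          ≤ frob A ^ 3) ∧
    Tendsto E atTop (nhds 0) := by
  refine ⟨fun A hA => frob_step A hA, ?_⟩
  set c := frob E₀ with hc
  have hc0 : 0 ≤ c := frob_nonneg E₀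
  have hbound : ∀ f, frob (E f) ≤ c ^ (f + 1) := by
    intro f
    induction f with
    | zero => simp [hE0]; exact le_rfl
    | succ f ih =>
      have hEf : frob (E f) < 1 :=
        lt_of_le_of_lt ih (pow_lt_one₀ hc0 hE₀ (Nat.succ_ne_zero f))
      calc frob (E (f + 1)) ≤ frob (E f) ^ 3 := by rw [hiter f]; exact frob_step _ hEf
        _ ≤ (c ^ (f + 1)) ^ 3 := by
            exact pow_le_pow_left₀ (frob_nonneg _) ih 3
        _ = c ^ (3 * (f + 1)) := by rw [← pow_mul, mul_comm]
        _ ≤ c ^ (f + 2) := pow_le_pow_of_le_one hc0 hE₀.le (by omega)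
  have htend : Tendsto (fun f => c ^ (f + 1)) atTop (nhds 0) :=
    (tendsto_pow_atTop_nhds_zero_of_lt_one hc0 hE₀).comp (tendsto_add_atTop_nat 1)
  apply tendsto_pi_nhds.2
  intro i
  rw [tendsto_pi_nhds]
  intro j
  have : ∀ f, |E f i j| ≤ c ^ (f + 1) := fun f => (entry_le_frob _ i j).trans (hbound f)
  simpa using squeeze_zero_norm (fun f => by simpa using this f) htend
end

section
/- For a 3×3 matrix M with SVD M = U Σ Vᵀ (singular values σ₁ ≥ σ₂ ≥ σ₃ ≥ 0 and σ₂ > 0), the matrix R = U diag(1,1,det(UVᵀ)) Vᵀ is the rotation matrix minimizing the Frobenius distance ‖R − M‖_F over all R ∈ SO(3). -/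
open Matrix

lemma my_mul_vecMulVec {n : Type*} [Fintype n] (A : Matrix n n ℝ) (u w : n → ℝ) :
    A * vecMulVec u w = vecMulVec (A *ᵥ u) w := by
  ext i j
  simp [Matrix.mul_apply, vecMulVec_apply, Matrix.mulVec, dotProduct,
    Finset.sum_mul, mul_assoc]

lemma my_vecMulVec_mul {n : Type*} [Fintype n] (A : Matrix n n ℝ) (u w : n → ℝ) :
    vecMulVec u w * A = vecMulVec u (w ᵥ* A) := by
  ext i j
  simp [Matrix.mul_apply, vecMulVec_apply, Matrix.vecMul, dotProduct,
    Finset.mul_sum, mul_assoc]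

lemma my_vecMulVec_transpose {n : Type*} (u : n → ℝ) :
    (vecMulVec u u)ᵀ = vecMulVec u u := by
  ext i j; simp [vecMulVec_apply, mul_comm]

lemma diag_le_one {n : Type*} [Fintype n] [DecidableEq n] (Q : Matrix n n ℝ)
    (hQ : Qᵀ * Q = 1) (i : n) : Q i i ≤ 1 := by
  have h : ∑ k, Q k i * Q k i = 1 := by
    have := congrFun (congrFun hQ i) i
    simpa [Matrix.mul_apply, Matrix.transpose_apply] using this
  have h1 : Q i i * Q i i ≤ 1 := by
    rw [← h]
    exact Finset.single_le_sum (f := fun k => Q k i * Q k i)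
      (fun k _ => mul_self_nonneg _) (Finset.mem_univ i)
  nlinarith

lemma trace_le_of_neg_det {n : Type*} [Fintype n] [DecidableEq n] (Q : Matrix n n ℝ)
    (hQ : Qᵀ * Q = 1) (hdet : Q.det = -1) : Q.trace ≤ (Fintype.card n : ℝ) - 2 := by
  have hdet0 : (1 + Q).det = 0 := by
    have h1 : (1 + Q) = (Qᵀ + 1) * Q := by rw [add_mul, hQ, one_mul]
    have h2 : (1 + Q).det = (Qᵀ + 1).det * Q.det := by rw [h1, det_mul]
    have h3 : (Qᵀ + 1).det = (1 + Q).det := by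
      rw [← Matrix.det_transpose (Qᵀ + 1)]
      congr 1
      rw [Matrix.transpose_add, Matrix.transpose_transpose, Matrix.transpose_one, add_comm]
    rw [h3, hdet] at h2
    linarith
  obtain ⟨v, hv0, hv⟩ := (Matrix.exists_mulVec_eq_zero_iff.mpr hdet0)
  have hQv : Q *ᵥ v = -v := by
    rw [Matrix.add_mulVec, Matrix.one_mulVec] at hv
    linear_combination (norm := module) hv
  have hs : 0 < v ⬝ᵥ v := by
    have hne : v ⬝ᵥ v ≠ 0 := by
      intro h
      apply hv0
      funext i
      have := (Finset.sum_eq_zero_iff_of_nonneg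
        (fun k _ => mul_self_nonneg (v k))).mp h i (Finset.mem_univ i)
      simpa using mul_self_eq_zero.mp this
    have hge : 0 ≤ v ⬝ᵥ v := Finset.sum_nonneg (fun k _ => mul_self_nonneg _)
    exact lt_of_le_of_ne hge (Ne.symm hne)
  set c : ℝ := (Real.sqrt (v ⬝ᵥ v))⁻¹ with hc
  set u : n → ℝ := c • v with hu
  have hsqrt : Real.sqrt (v ⬝ᵥ v) * Real.sqrt (v ⬝ᵥ v) = v ⬝ᵥ v :=
    Real.mul_self_sqrt hs.le
  have hsqrtpos : 0 < Real.sqrt (v ⬝ᵥ v) := Real.sqrt_pos.mpr hs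
  have huu : u ⬝ᵥ u = 1 := by
    rw [hu, smul_dotProduct, dotProduct_smul, smul_eq_mul, smul_eq_mul, hc, ← hsqrt]
    field_simp
    rw [Real.sqrt_sq hsqrtpos.le]
  have hQu : Q *ᵥ u = -u := by
    rw [hu, Matrix.mulVec_smul, hQv, smul_neg]
  have hQtu : Qᵀ *ᵥ u = -u := by
    have h1 : Qᵀ *ᵥ (Q *ᵥ u) = u := by
      rw [Matrix.mulVec_mulVec, hQ, Matrix.one_mulVec]
    rw [hQu, Matrix.mulVec_neg] at h1
    linear_combination (norm := module) -h1
  have huQ : u ᵥ* Q = -u := by rw [← Matrix.mulVec_transpose, hQtu]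
  set W : Matrix n n ℝ := vecMulVec u u with hW
  set Q' : Matrix n n ℝ := Q + (2:ℝ) • W with hQ'def
  have hQ'orth : Q'ᵀ * Q' = 1 := by
    have e1 : Qᵀ * W = -W := by
      rw [hW, my_mul_vecMulVec, hQtu]
      ext i j; simp [vecMulVec_apply]
    have e2 : W * Q = -W := by
      rw [hW, my_vecMulVec_mul, huQ]
      ext i j; simp [vecMulVec_apply]
    have e3 : W * W = W := by
      ext i j
      have hsum : ∑ k, (u i * u k) * (u k * u j) = (u i * u j) * (u ⬝ᵥ u) := by
        rw [dotProduct, Finset.mul_sum]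
        exact Finset.sum_congr rfl (fun k _ => by ring)
      simp [hW, Matrix.mul_apply, vecMulVec_apply, hsum, huu]
    have hWt : Wᵀ = W := my_vecMulVec_transpose u
    rw [hQ'def, Matrix.transpose_add, Matrix.transpose_smul, hWt]
    rw [add_mul, mul_add, mul_add, hQ, Matrix.smul_mul, Matrix.smul_mul, Matrix.mul_smul,
      Matrix.mul_smul, e1, e2, e3]
    module
  have htrW : W.trace = 1 := by
    rw [hW]
    simpa [Matrix.trace, Matrix.diag, vecMulVec_apply, dotProduct] using huu
  have htrQ' : Q'.trace ≤ (Fintype.card n : ℝ) := by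
    rw [Matrix.trace]
    calc ∑ i, Q'.diag i ≤ ∑ _i : n, (1:ℝ) :=
          Finset.sum_le_sum (fun i _ => diag_le_one Q' hQ'orth i)
      _ = (Fintype.card n : ℝ) := by simp
  have : Q'.trace = Q.trace + 2 := by
    rw [hQ'def, Matrix.trace_add, Matrix.trace_smul, htrW, smul_eq_mul, mul_one]
  linarith

lemma key_ineq (Q : Matrix (Fin 3) (Fin 3) ℝ) (hQ : Qᵀ * Q = 1) (σ : Fin 3 → ℝ)
    (h01 : σ 1 ≤ σ 0) (h12 : σ 2 ≤ σ 1) (h3 : 0 ≤ σ 2) :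
    Q 0 0 * σ 0 + Q 1 1 * σ 1 + Q 2 2 * σ 2 ≤ σ 0 + σ 1 + Q.det * σ 2 := by
  have hd2 : Q.det * Q.det = 1 := by
    have := congrArg Matrix.det hQ
    rwa [Matrix.det_mul, Matrix.det_transpose, Matrix.det_one] at this
  have hd : Q.det = 1 ∨ Q.det = -1 := by
    rcases mul_self_eq_one_iff.mp hd2 with h | h
    · exact Or.inl h
    · exact Or.inr h
  have d0 := diag_le_one Q hQ 0
  have d1 := diag_le_one Q hQ 1
  have d2 := diag_le_one Q hQ 2
  rcases hd with h | h
  · rw [h]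
    nlinarith [mul_nonneg (sub_nonneg.mpr d0) (by linarith : (0:ℝ) ≤ σ 0),
      mul_nonneg (sub_nonneg.mpr d1) (by linarith : (0:ℝ) ≤ σ 1),
      mul_nonneg (sub_nonneg.mpr d2) h3]
  · rw [h]
    have htr := trace_le_of_neg_det Q hQ h
    rw [Matrix.trace] at htr
    simp only [Fin.sum_univ_three, Matrix.diag_apply] at htr
    have hcard : ((Fintype.card (Fin 3)) : ℝ) = 3 := by simp
    rw [hcard] at htr
    nlinarith [mul_nonneg (sub_nonneg.mpr d0) (sub_nonneg.mpr h01),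
      mul_nonneg (by linarith : (0:ℝ) ≤ 2 - Q 0 0 - Q 1 1) (sub_nonneg.mpr h12),
      mul_nonneg (by linarith : (0:ℝ) ≤ 1 - (Q 0 0 + Q 1 1 + Q 2 2)) h3]

lemma sum_sq_eq_trace {n m : Type*} [Fintype n] [Fintype m] (A : Matrix m n ℝ) :
    ∑ i, ∑ j, (A i j) ^ 2 = (Aᵀ * A).trace := by
  rw [Matrix.trace]
  simp only [Matrix.diag_apply, Matrix.mul_apply, Matrix.transpose_apply, sq]
  exact Finset.sum_comm

lemma sum_sq_eq_trace' {n m : Type*} [Fintype n] [Fintype m] (A : Matrix m n ℝ) :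
    ∑ i, ∑ j, (A i j) ^ 2 = (Aᵀ * A).trace := by
  rw [Matrix.trace]
  simp only [Matrix.diag_apply, Matrix.mul_apply, Matrix.transpose_apply, sq]
  exact Finset.sum_comm

lemma expand_trace (X M : Matrix (Fin 3) (Fin 3) ℝ) (hX : Xᵀ * X = 1) :
    ((X - M)ᵀ * (X - M)).trace = 3 - 2 * ((Xᵀ * M).trace) + (Mᵀ * M).trace := by
  have h1 : (X - M)ᵀ * (X - M) = Xᵀ * X - Xᵀ * M - Mᵀ * X + Mᵀ * M := by
    rw [Matrix.transpose_sub]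
    noncomm_ring
  have h2 : (Mᵀ * X).trace = (Xᵀ * M).trace := by
    rw [← Matrix.trace_transpose (Mᵀ * X), Matrix.transpose_mul, Matrix.transpose_transpose]
  rw [h1, Matrix.trace_add, Matrix.trace_sub, Matrix.trace_sub, hX, h2]
  have : (1 : Matrix (Fin 3) (Fin 3) ℝ).trace = 3 := by
    simp [Matrix.trace_one]
  rw [this]; ring
lemma frob_trace_conj (V X : Matrix (Fin 3) (Fin 3) ℝ) (hV : Vᵀ * V = 1) :
    (V * X * Vᵀ).trace = X.trace := by
  rw [Matrix.trace_mul_cycle, hV, Matrix.one_mul]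

/-- Special orthogonal Procrustes: `R₀ = U diag(1,1,det(UVᵀ)) Vᵀ` minimizes the
Frobenius distance to `M` over `SO(3)`. -/
theorem procrustes_optimality
    (M U V : Matrix (Fin 3) (Fin 3) ℝ) (σ : Fin 3 → ℝ)
    (hU : Uᵀ * U = 1) (hV : Vᵀ * V = 1)
    (h01 : σ 1 ≤ σ 0) (h12 : σ 2 ≤ σ 1) (h3 : 0 ≤ σ 2) (h2 : 0 < σ 1)
    (hM : M = U * Matrix.diagonal σ * Vᵀ)
    (R₀ : Matrix (Fin 3) (Fin 3) ℝ)
    (hR₀ : R₀ = U * Matrix.diagonal ![1, 1, (U * Vᵀ).det] * Vᵀ) :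
    ∀ R : Matrix (Fin 3) (Fin 3) ℝ, Rᵀ * R = 1 → R.det = 1 →
      frob (R₀ - M) ≤ frob (R - M) := by
  intro R hR hRdet
  have hVVt : V * Vᵀ = 1 := mul_eq_one_comm.mp hV
  have hRRt : R * Rᵀ = 1 := mul_eq_one_comm.mp hR
  set d : ℝ := (U * Vᵀ).det with hddef
  have hd : d = U.det * V.det := by rw [hddef, Matrix.det_mul, Matrix.det_transpose]
  have hU2 : U.det * U.det = 1 := by
    have := congrArg Matrix.det hU
    rwa [Matrix.det_mul, Matrix.det_transpose, Matrix.det_one] at this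
  have hV2 : V.det * V.det = 1 := by
    have := congrArg Matrix.det hV
    rwa [Matrix.det_mul, Matrix.det_transpose, Matrix.det_one] at this
  have hd2 : d * d = 1 := by rw [hd]; nlinarith
  set D : Matrix (Fin 3) (Fin 3) ℝ := Matrix.diagonal ![1,1,d] with hD
  have hDD : D * D = 1 := by
    rw [hD, Matrix.diagonal_mul_diagonal]
    ext i j
    rcases eq_or_ne i j with rfl | hij
    · fin_cases i <;> simp [Matrix.one_apply, hd2]
    · simp [Matrix.diagonal_apply_ne _ hij, Matrix.one_apply_ne hij]
  have hDt : Dᵀ = D := by rw [hD, Matrix.diagonal_transpose]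
  have hR0 : R₀ = U * D * Vᵀ := hR₀
  have hR0orth : R₀ᵀ * R₀ = 1 := by
    rw [hR0]
    simp only [Matrix.transpose_mul, Matrix.transpose_transpose, hDt, Matrix.mul_assoc]
    rw [← Matrix.mul_assoc Uᵀ U, hU, Matrix.one_mul, ← Matrix.mul_assoc D D, hDD,
      Matrix.one_mul, hVVt]
  have htrR0 : (R₀ᵀ * M).trace = σ 0 + σ 1 + d * σ 2 := by
    have e : R₀ᵀ * M = V * (D * Matrix.diagonal σ) * Vᵀ := by
      rw [hR0, hM]
      simp only [Matrix.transpose_mul, Matrix.transpose_transpose, hDt, Matrix.mul_assoc]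
      rw [← Matrix.mul_assoc Uᵀ U, hU, Matrix.one_mul]
    rw [e, frob_trace_conj V _ hV, hD, Matrix.diagonal_mul_diagonal, Matrix.trace_diagonal]
    simp [Fin.sum_univ_three]
  set Q : Matrix (Fin 3) (Fin 3) ℝ := Vᵀ * Rᵀ * U with hQdef
  have hQorth : Qᵀ * Q = 1 := by
    rw [hQdef]
    simp only [Matrix.transpose_mul, Matrix.transpose_transpose, Matrix.mul_assoc]
    rw [← Matrix.mul_assoc V Vᵀ, hVVt, Matrix.one_mul, ← Matrix.mul_assoc R Rᵀ, hRRt,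
      Matrix.one_mul, hU]
  have hQdet : Q.det = d := by
    rw [hQdef]
    simp only [Matrix.det_mul, Matrix.det_transpose, hRdet, hd]
    ring
  have htrR : (Rᵀ * M).trace = Q 0 0 * σ 0 + Q 1 1 * σ 1 + Q 2 2 * σ 2 := by
    have e : Rᵀ * M = Rᵀ * U * (Matrix.diagonal σ) * Vᵀ := by
      rw [hM]; simp only [Matrix.mul_assoc]
    rw [e, Matrix.trace_mul_cycle, ← Matrix.mul_assoc Vᵀ Rᵀ U, ← hQdef, Matrix.trace]
    simp [Matrix.diag_apply, Matrix.mul_diagonal, Fin.sum_univ_three]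
  have hkey : (Rᵀ * M).trace ≤ (R₀ᵀ * M).trace := by
    rw [htrR, htrR0]
    have := key_ineq Q hQorth σ h01 h12 h3
    rwa [hQdet] at this
  unfold frob
  apply Real.sqrt_le_sqrt
  rw [sum_sq_eq_trace', sum_sq_eq_trace', expand_trace R₀ M hR0orth, expand_trace R M hR]
  linarith
end

section
/- For a 3×3 skew-symmetric matrix ω^ built from ω ∈ ℝ³ with ‖ω‖ = θ, the Rodrigues formula holds: exp(ω^) = I + (sin θ/θ) ω^ + ((1 − cos θ)/θ²) (ω^)², and exp(ω^) ∈ SO(3). -/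
open Matrix

/-- The skew-symmetric matrix `ω^` of `ω ∈ ℝ³`. -/
def skew (ω : Fin 3 → ℝ) : Matrix (Fin 3) (Fin 3) ℝ :=
  !![0, -ω 2, ω 1; ω 2, 0, -ω 0; -ω 1, ω 0, 0]

lemma skew_cube (ω : Fin 3 → ℝ) :
    skew ω ^ 3 = (-(∑ i, ω i ^ 2)) • skew ω := by
  ext i j
  fin_cases i <;> fin_cases j <;>
    simp [skew, pow_succ, Matrix.mul_apply, Fin.sum_univ_three] <;> ring

lemma skew_transpose (ω : Fin 3 → ℝ) : (skew ω)ᵀ = -skew ω := by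
  ext i j
  fin_cases i <;> fin_cases j <;> simp [skew]

lemma det_aux (ω : Fin 3 → ℝ) (s c : ℝ) :
    (1 + s • skew ω + c • (skew ω ^ 2)).det =
      (1 - c * (∑ i, ω i ^ 2)) ^ 2 + s ^ 2 * (∑ i, ω i ^ 2) := by
  simp [Matrix.det_fin_three, skew, pow_two, Matrix.mul_apply, Fin.sum_univ_three,
    Matrix.one_apply]
  ring

lemma skew_pow_odd (ω : Fin 3 → ℝ) (k : ℕ) :
    skew ω ^ (2 * k + 1) = ((-(∑ i, ω i ^ 2)) ^ k) • skew ω := by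
  induction k with
  | zero => simp
  | succ k ih =>
    have : 2 * (k + 1) + 1 = (2 * k + 1) + 2 := by ring
    rw [this, pow_add, ih, smul_mul_assoc, ← pow_succ']
    rw [show (2:ℕ)+1 = 3 from rfl, skew_cube, smul_smul, ← pow_succ]

lemma skew_pow_even (ω : Fin 3 → ℝ) (k : ℕ) :
    skew ω ^ (2 * k + 2) = ((-(∑ i, ω i ^ 2)) ^ k) • skew ω ^ 2 := by
  have : 2 * k + 2 = (2 * k + 1) + 1 := by ring
  rw [this, pow_succ, skew_pow_odd, smul_mul_assoc, ← pow_two]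

lemma rodrigues_exp (ω : Fin 3 → ℝ) (θ : ℝ)
    (hθ : θ = Real.sqrt (∑ i, ω i ^ 2)) (hpos : 0 < θ) :
    NormedSpace.exp (skew ω) =
      1 + (Real.sin θ / θ) • skew ω + ((1 - Real.cos θ) / θ ^ 2) • (skew ω ^ 2) := by
  set A := skew ω with hA
  have hθ0 : θ ≠ 0 := ne_of_gt hpos
  have hq : θ ^ 2 = ∑ i, ω i ^ 2 := by
    rw [hθ, Real.sq_sqrt]
    positivity
  set f : ℕ → Matrix (Fin 3) (Fin 3) ℝ := fun n => ((Nat.factorial n : ℝ)⁻¹) • A ^ n with hf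
  have hodd : HasSum (fun k => f (2 * k + 1)) ((Real.sin θ / θ) • A) := by
    have h1 := (Real.hasSum_sin θ).smul_const (θ⁻¹ • A)
    have hfun : (fun k : ℕ => ((-1) ^ k * θ ^ (2 * k + 1) / (Nat.factorial (2 * k + 1) : ℝ)) • (θ⁻¹ • A))
        = fun k => f (2 * k + 1) := by
      funext k
      rw [hf]
      simp only
      rw [skew_pow_odd, ← hq, smul_smul, smul_smul]
      congr 1
      have h2 : θ ^ (2 * k + 1) = (θ ^ 2) ^ k * θ := by
        rw [← pow_mul, ← pow_succ]
      rw [neg_pow, h2]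
      have : (Nat.factorial (2 * k + 1) : ℝ) ≠ 0 := Nat.cast_ne_zero.mpr (Nat.factorial_ne_zero _)
      field_simp
      ring
    rw [hfun] at h1
    rwa [smul_smul, ← div_eq_mul_inv] at h1
  have heven : HasSum (fun k => f (2 * k + 2)) (((1 - Real.cos θ) / θ ^ 2) • A ^ 2) := by
    have hc : HasSum (fun n : ℕ => (-1) ^ (n + 1) * θ ^ (2 * (n + 1)) / (Nat.factorial (2 * (n + 1)) : ℝ))
        (Real.cos θ - 1) := by
      have hc0 := (hasSum_nat_add_iff'
        (f := fun n : ℕ => ((-1) ^ n * θ ^ (2 * n) / (Nat.factorial (2 * n)) : ℝ)) 1).mpr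
        (Real.hasSum_cos θ)
      have he : Real.cos θ - ∑ i ∈ Finset.range 1,
          ((-1) ^ i * θ ^ (2 * i) / (Nat.factorial (2 * i)) : ℝ) = Real.cos θ - 1 := by
        simp
      rwa [he] at hc0
    have h1 := (hc.neg).smul_const ((θ ^ 2)⁻¹ • A ^ 2)
    have hfun : (fun k : ℕ => (-((-1) ^ (k + 1) * θ ^ (2 * (k + 1)) / (Nat.factorial (2 * (k + 1)) : ℝ))) •
          ((θ ^ 2)⁻¹ • A ^ 2)) = fun k => f (2 * k + 2) := by
      funext k
      rw [hf]
      simp only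
      have h3 : 2 * k + 2 = 2 * (k + 1) := by ring
      rw [show (2 * k + 2) = 2 * (k+1) from by ring] at *
      rw [show (2 * (k+1)) = 2 * k + 2 from by ring, skew_pow_even, ← hq, smul_smul, smul_smul,
        show (2 * k + 2) = 2 * (k+1) from by ring]
      congr 1
      rw [neg_pow, pow_mul]
      have : (Nat.factorial (2 * (k + 1)) : ℝ) ≠ 0 := Nat.cast_ne_zero.mpr (Nat.factorial_ne_zero _)
      have hθ2 : (θ:ℝ) ^ 2 ≠ 0 := pow_ne_zero _ (ne_of_gt hpos)
      field_simp
      ring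
    rw [hfun] at h1
    rwa [neg_sub, smul_smul, ← div_eq_mul_inv] at h1
  have hg : HasSum (fun n => f (n + 1))
      ((Real.sin θ / θ) • A + ((1 - Real.cos θ) / θ ^ 2) • A ^ 2) := by
    exact HasSum.even_add_odd hodd heven
  have hfull : HasSum f (1 + (Real.sin θ / θ) • A + ((1 - Real.cos θ) / θ ^ 2) • A ^ 2) := by
    have := (hasSum_nat_add_iff (f := f) 1).mp hg
    have he : (Real.sin θ / θ) • A + ((1 - Real.cos θ) / θ ^ 2) • A ^ 2 +
        ∑ i ∈ Finset.range 1, f i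
        = 1 + (Real.sin θ / θ) • A + ((1 - Real.cos θ) / θ ^ 2) • A ^ 2 := by
      simp [hf]
      abel
    rwa [he] at this
  rw [NormedSpace.exp_eq_tsum (𝕂 := ℝ)]
  exact hfull.tsum_eq

/-- Rodrigues' formula: `exp(ω^) = I + (sin θ/θ) ω^ + ((1−cos θ)/θ²)(ω^)²`, and
`exp(ω^) ∈ SO(3)`. -/
theorem rodrigues_formula (ω : Fin 3 → ℝ) (θ : ℝ)
    (hθ : θ = Real.sqrt (∑ i, ω i ^ 2)) (hpos : 0 < θ) :
    NormedSpace.exp (skew ω) =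
      1 + (Real.sin θ / θ) • skew ω + ((1 - Real.cos θ) / θ ^ 2) • (skew ω ^ 2) ∧
    (NormedSpace.exp (skew ω))ᵀ * NormedSpace.exp (skew ω) = 1 ∧
    (NormedSpace.exp (skew ω)).det = 1 := by
  have hθ0 : θ ≠ 0 := ne_of_gt hpos
  have hq : θ ^ 2 = ∑ i, ω i ^ 2 := by
    rw [hθ, Real.sq_sqrt]
    positivity
  have h1 := rodrigues_exp ω θ hθ hpos
  refine ⟨h1, ?_, ?_⟩
  · rw [← Matrix.exp_transpose, skew_transpose,
      ← Matrix.exp_add_of_commute (-(skew ω)) (skew ω) ((Commute.refl (skew ω)).neg_left),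
      neg_add_cancel, NormedSpace.exp_zero]
  · rw [h1, det_aux, ← hq]
    have h2 : (1 - Real.cos θ) / θ ^ 2 * θ ^ 2 = 1 - Real.cos θ := by
      field_simp
    rw [h2]
    have h3 : (Real.sin θ / θ) ^ 2 * θ ^ 2 = Real.sin θ ^ 2 := by
      field_simp
    rw [h3]
    have := Real.sin_sq_add_cos_sq θ
    ring_nf
    nlinarith [Real.sin_sq_add_cos_sq θ]
end

section
/- Let J ∈ ℝ^{m×n} and let {Z_f} be any sequence of n×m matrices satisfying Z_f = Jᵀ W_f for some matrices W_f (i.e., each Z_f lies in the row space of J on the appropriate side) and J Z_f → J J⁺. Then Z_f → J⁺ provided additionally Z_f J → J⁺ J. In particular, limits of the hyperpower iteration started from Z₀ = α Jᵀ (α > 0) that satisfy these conditions equal the Moore–Penrose inverse J⁺. -/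
open Matrix Filter Topology

/-- Sequences in the row space of `J` whose products with `J` converge to the
corresponding products with `J⁺` converge to the Moore–Penrose inverse. -/
theorem limit_is_moore_penrose {m n : ℕ}
    (J : Matrix (Fin m) (Fin n) ℝ) (Jp : Matrix (Fin n) (Fin m) ℝ)
    (hp1 : J * Jp * J = J) (hp2 : Jp * J * Jp = Jp)
    (hp3 : (J * Jp)ᵀ = J * Jp) (hp4 : (Jp * J)ᵀ = Jp * J)
    (Z : ℕ → Matrix (Fin n) (Fin m) ℝ)
    (hW : ∀ f, ∃ W : Matrix (Fin m) (Fin m) ℝ, Z f = Jᵀ * W)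
    (hJZ : Tendsto (fun f => J * Z f) atTop (nhds (J * Jp)))
    (hZJ : Tendsto (fun f => Z f * J) atTop (nhds (Jp * J))) :
    Tendsto Z atTop (nhds Jp) := by
  have hJJt : Jp * J * Jᵀ = Jᵀ := by
    calc Jp * J * Jᵀ = (Jp * J)ᵀ * Jᵀ := by rw [hp4]
    _ = (J * (Jp * J))ᵀ := by simp [Matrix.transpose_mul, Matrix.mul_assoc]
    _ = Jᵀ := by rw [← Matrix.mul_assoc, hp1]
  have key : ∀ f, Z f = Jp * (J * Z f) := by
    intro f
    obtain ⟨W, hWf⟩ := hW f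
    rw [hWf, ← Matrix.mul_assoc, ← Matrix.mul_assoc, hJJt]
  have hc : Continuous fun A : Matrix (Fin m) (Fin m) ℝ => Jp * A :=
    continuous_const.matrix_mul continuous_id
  have h := (hc.tendsto (J * Jp)).comp hJZ
  simp only [Function.comp_def] at h
  rw [← Matrix.mul_assoc, hp2] at h
  exact h.congr fun f => (key f).symm
end
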